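/- Let T be a spherically homogeneous rooted tree, let G ≤ Aut(T) be a weakly branch group, let H ≤ G be a subgroup of finite index in G, and let K_1, K_2 ≤ H be two subnormal subgroups of H. If [K_1, K_2] = 1, then K_1 and K_2 have disjoint support: there is no vertex v of T with K_1 v ≠ {v} and K_2 v ≠ {v}. -/

import Mathlib

open scoped Pointwise

/-! ## Spherically homogeneous rooted trees -/

/-- A vertex of the spherically homogeneous rooted tree over the shifted sequence of
alphabets `i ↦ A (i + k)`: a finite word whose `j`-th letter belongs to `A (j + k)`. -/
def Vtx (A : ℕ → Type*) (k : ℕ) : Type _ :=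
  {l : List (Σ i, A i) // ∀ j (h : j < l.length), (l[j]'h).1 = j + k}

namespace Vtx

variable {A : ℕ → Type*}

/-- The length of a vertex (the distance to the root). -/
def len {k : ℕ} (v : Vtx A k) : ℕ := v.1.length

/-- The prefix relation on vertices. -/
def Pre {k : ℕ} (v w : Vtx A k) : Prop := v.1 <+: w.1

/-- The `n`-th level of the tree: all vertices of length `n`. -/
def level (A : ℕ → Type*) (k : ℕ) (n : ℕ) : Set (Vtx A k) := {v | v.len = n}

/-- Concatenation of a vertex of the tree with a word over the shifted alphabets. -/
def cat (v : Vtx A 0) (w : Vtx A v.len) : Vtx A 0 :=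
  ⟨v.1 ++ w.1, by
    intro j h
    by_cases hj : j < v.1.length
    · rw [List.getElem_append_left hj]
      exact v.2 j hj
    · push_neg at hj
      rw [List.getElem_append_right hj]
      have h2 : j - v.1.length < w.1.length := by
        have h3 := h
        simp only [List.length_append] at h3
        omega
      exact (w.2 (j - v.1.length) h2).trans
        (by show j - v.1.length + v.1.length = j + 0; omega)⟩

/-- Deleting a prefix of length `n` from a vertex. -/
def dropPre (n : ℕ) (u : Vtx A 0) : Vtx A n :=
  ⟨u.1.drop n, by
    intro j h
    have h' : n + j < u.1.length := by
      simp only [List.length_drop] at h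
      omega
    rw [List.getElem_drop]
    exact (u.2 (n + j) h').trans (by omega)⟩

end Vtx

/-- The full automorphism group of the rooted tree `T_k`:
bijections of the vertex set preserving word length and the prefix relation. -/
def treeAut (A : ℕ → Type*) (k : ℕ) : Subgroup (Equiv.Perm (Vtx A k)) where
  carrier := {f | (∀ v, (f v).len = v.len) ∧ ∀ v w, Vtx.Pre (f v) (f w) ↔ Vtx.Pre v w}
  one_mem' := ⟨fun _ => rfl, fun _ _ => Iff.rfl⟩
  mul_mem' := by
    rintro f g ⟨hf1, hf2⟩ ⟨hg1, hg2⟩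
    constructor
    · intro v
      have : (f * g) v = f (g v) := rfl
      rw [this]
      exact (hf1 (g v)).trans (hg1 v)
    · intro v w
      have e1 : (f * g) v = f (g v) := rfl
      have e2 : (f * g) w = f (g w) := rfl
      rw [e1, e2]
      exact (hf2 (g v) (g w)).trans (hg2 v w)
  inv_mem' := by
    rintro f ⟨hf1, hf2⟩
    constructor
    · intro v
      conv_rhs => rw [← Equiv.apply_symm_apply f v]
      exact (hf1 _).symm
    · intro v w
      conv_rhs => rw [← Equiv.apply_symm_apply f v, ← Equiv.apply_symm_apply f w]
      exact (hf2 _ _).symm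

variable {A : ℕ → Type*}

/-- The stabiliser `St_H(v)` of a vertex `v` in a subgroup `H ≤ Perm`. -/
def vstab {k : ℕ} (H : Subgroup (Equiv.Perm (Vtx A k))) (v : Vtx A k) :
    Subgroup (Equiv.Perm (Vtx A k)) where
  carrier := {g | g ∈ H ∧ g v = v}
  one_mem' := ⟨H.one_mem, rfl⟩
  mul_mem' := by
    rintro a b ⟨ha, ha'⟩ ⟨hb, hb'⟩
    refine ⟨H.mul_mem ha hb, ?_⟩
    have : (a * b) v = a (b v) := rfl
    rw [this, hb', ha']
  inv_mem' := by
    rintro a ⟨ha, ha'⟩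
    refine ⟨H.inv_mem ha, ?_⟩
    conv_lhs => rw [← ha']
    exact Equiv.symm_apply_apply a v

/-- The stabiliser `St_H(n)` of the `n`-th level. -/
def levStab {k : ℕ} (H : Subgroup (Equiv.Perm (Vtx A k))) (n : ℕ) :
    Subgroup (Equiv.Perm (Vtx A k)) where
  carrier := {g | g ∈ H ∧ ∀ v : Vtx A k, v.len = n → g v = v}
  one_mem' := ⟨H.one_mem, fun _ _ => rfl⟩
  mul_mem' := by
    rintro a b ⟨ha, ha'⟩ ⟨hb, hb'⟩
    refine ⟨H.mul_mem ha hb, fun v hv => ?_⟩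
    have : (a * b) v = a (b v) := rfl
    rw [this, hb' v hv, ha' v hv]
  inv_mem' := by
    rintro a ⟨ha, ha'⟩
    refine ⟨H.inv_mem ha, fun v hv => ?_⟩
    conv_lhs => rw [← ha' v hv]
    exact Equiv.symm_apply_apply a v

/-- The rigid stabiliser `rist_H(v)`: elements of `H` fixing every vertex that does not
have `v` as a prefix. -/
def rist {k : ℕ} (H : Subgroup (Equiv.Perm (Vtx A k))) (v : Vtx A k) :
    Subgroup (Equiv.Perm (Vtx A k)) where
  carrier := {g | g ∈ H ∧ ∀ w : Vtx A k, ¬ Vtx.Pre v w → g w = w}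
  one_mem' := ⟨H.one_mem, fun _ _ => rfl⟩
  mul_mem' := by
    rintro a b ⟨ha, ha'⟩ ⟨hb, hb'⟩
    refine ⟨H.mul_mem ha hb, fun w hw => ?_⟩
    have : (a * b) w = a (b w) := rfl
    rw [this, hb' w hw, ha' w hw]
  inv_mem' := by
    rintro a ⟨ha, ha'⟩
    refine ⟨H.inv_mem ha, fun w hw => ?_⟩
    conv_lhs => rw [← ha' w hw]
    exact Equiv.symm_apply_apply a w

/-- The rigid level stabiliser `rist_H(n)`: the subgroup generated by the rigid
stabilisers of the vertices on the `n`-th level. -/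
def ristLev {k : ℕ} (H : Subgroup (Equiv.Perm (Vtx A k))) (n : ℕ) :
    Subgroup (Equiv.Perm (Vtx A k)) :=
  ⨆ v ∈ {v : Vtx A k | v.len = n}, rist H v

/-- `G` acts spherically transitively: transitively on every level of the tree. -/
def SphTrans {k : ℕ} (G : Subgroup (Equiv.Perm (Vtx A k))) : Prop :=
  ∀ v w : Vtx A k, v.len = w.len → ∃ g ∈ G, g v = w

/-- `G ≤ Aut(T_k)` is a branch group. -/
structure IsBranch {k : ℕ} (G : Subgroup (Equiv.Perm (Vtx A k))) : Prop where
  le_aut : G ≤ treeAut A k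
  trans : SphTrans G
  rist_fi : ∀ n : ℕ, (ristLev G n).relIndex G ≠ 0

/-- `G ≤ Aut(T_k)` is a weakly branch group. -/
structure IsWeaklyBranch {k : ℕ} (G : Subgroup (Equiv.Perm (Vtx A k))) : Prop where
  le_aut : G ≤ treeAut A k
  trans : SphTrans G
  rist_nt : ∀ n : ℕ, ristLev G n ≠ ⊥

/-! ## Sections -/

namespace Vtx

theorem dropPre_cat (v : Vtx A 0) (w : Vtx A v.len) : dropPre v.len (cat v w) = w := by
  apply Subtype.ext
  show (v.1 ++ w.1).drop v.1.length = w.1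
  exact List.drop_left

theorem pre_cat (v : Vtx A 0) (w : Vtx A v.len) : Pre v (cat v w) := ⟨w.1, rfl⟩

theorem cat_dropPre {v u : Vtx A 0} (h : Pre v u) : cat v (dropPre v.len u) = u := by
  apply Subtype.ext
  show v.1 ++ u.1.drop v.1.length = u.1
  obtain ⟨t, ht⟩ := h
  rw [← ht, List.drop_left]

end Vtx

/-- The section map `φ_v` at the level of plain functions. -/
def secFun (v : Vtx A 0) (f : Equiv.Perm (Vtx A 0)) : Vtx A v.len → Vtx A v.len :=
  fun w => Vtx.dropPre v.len (f (Vtx.cat v w))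

theorem secFun_key {v : Vtx A 0} {f : Equiv.Perm (Vtx A 0)}
    (hf : f ∈ vstab (treeAut A 0) v) (w : Vtx A v.len) :
    Vtx.cat v (secFun v f w) = f (Vtx.cat v w) := by
  obtain ⟨⟨hlen, hpre⟩, hfix⟩ := hf
  apply Vtx.cat_dropPre
  have := (hpre v (Vtx.cat v w))
  rw [hfix] at this
  exact this.mpr (Vtx.pre_cat v w)

theorem secFun_mul {v : Vtx A 0} {f g : Equiv.Perm (Vtx A 0)}
    (hf : f ∈ vstab (treeAut A 0) v) (hg : g ∈ vstab (treeAut A 0) v) :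
    secFun v (f * g) = secFun v f ∘ secFun v g := by
  funext w
  show Vtx.dropPre v.len ((f * g) (Vtx.cat v w)) = Vtx.dropPre v.len (f (Vtx.cat v (secFun v g w)))
  rw [secFun_key hg w]
  rfl

theorem secFun_one (v : Vtx A 0) : secFun v (1 : Equiv.Perm (Vtx A 0)) = id := by
  funext w
  show Vtx.dropPre v.len ((1 : Equiv.Perm (Vtx A 0)) (Vtx.cat v w)) = w
  rw [Equiv.Perm.one_apply]
  exact Vtx.dropPre_cat v w

theorem secFun_bij {v : Vtx A 0} {f : Equiv.Perm (Vtx A 0)}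
    (hf : f ∈ vstab (treeAut A 0) v) : Function.Bijective (secFun v f) := by
  rw [Function.bijective_iff_has_inverse]
  refine ⟨secFun v f⁻¹, fun w => ?_, fun w => ?_⟩
  · have h1 := congrFun (secFun_mul (inv_mem hf) hf) w
    rw [inv_mul_cancel, secFun_one] at h1
    exact h1.symm
  · have h1 := congrFun (secFun_mul hf (inv_mem hf)) w
    rw [mul_inv_cancel, secFun_one] at h1
    exact h1.symm

open Classical in
noncomputable def secPerm (v : Vtx A 0) (f : Equiv.Perm (Vtx A 0)) :
    Equiv.Perm (Vtx A v.len) :=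
  if h : Function.Bijective (secFun v f) then Equiv.ofBijective _ h else 1

theorem secPerm_coe {v : Vtx A 0} {f : Equiv.Perm (Vtx A 0)}
    (hf : f ∈ vstab (treeAut A 0) v) : ⇑(secPerm v f) = secFun v f := by
  unfold secPerm
  rw [dif_pos (secFun_bij hf)]
  rfl

/-- The section homomorphism `φ_v : St_{Aut(T)}(v) → Perm(T_{|v|})`. -/
noncomputable def phiHom (v : Vtx A 0) :
    ↥(vstab (treeAut A 0) v) →* Equiv.Perm (Vtx A v.len) where
  toFun f := secPerm v f.1
  map_one' := by
    apply Equiv.ext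
    intro w
    show secPerm v (1 : Equiv.Perm (Vtx A 0)) w = (1 : Equiv.Perm (Vtx A v.len)) w
    rw [secPerm_coe (one_mem (vstab (treeAut A 0) v)), secFun_one]
    rfl
  map_mul' := by
    intro f g
    apply Equiv.ext
    intro w
    show secPerm v (f.1 * g.1) w = (secPerm v f.1 * secPerm v g.1) w
    have e : (secPerm v f.1 * secPerm v g.1) w = secPerm v f.1 (secPerm v g.1 w) := rfl
    rw [e, secPerm_coe (mul_mem f.2 g.2), secPerm_coe f.2, secPerm_coe g.2,
      secFun_mul f.2 g.2]
    rfl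

/-- The image `φ_v(St_H(v)) ≤ Perm(T_{|v|})` of the stabiliser of `v` in `H` under the
section homomorphism at `v`; for `H ≤ G ≤ Aut(T)` this is the subgroup written `H_v`. -/
noncomputable def secSub (v : Vtx A 0) (H : Subgroup (Equiv.Perm (Vtx A 0))) :
    Subgroup (Equiv.Perm (Vtx A v.len)) :=
  Subgroup.map (phiHom v) ((vstab H v).subgroupOf (vstab (treeAut A 0) v))

/-- A subgroup `H ≤ G` has finite bi-index if the set of double cosets
`{HgH : g ∈ G}` is finite. -/
def FiniteBiIndex {G : Type*} [Group G] (H : Subgroup G) : Prop :=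
  {S : Set G | ∃ g : G, S = (H : Set G) * {g} * (H : Set G)}.Finite

/-- The set of double cosets of a subgroup `H` of a group `M` with representatives in a
subgroup `G` of `M`; for `H ≤ G` this is the set of double cosets `H\G/H`. -/
def doubleCosets {M : Type*} [Group M] (G H : Subgroup M) : Set (Set M) :=
  {S : Set M | ∃ g ∈ G, S = (H : Set M) * {g} * (H : Set M)}

/-- The pro-normal closure of a subgroup `H ≤ G`: the intersection of the subsets `HN`,
over all nontrivial normal subgroups `N` of `G`. -/
def pronormalClosure {G : Type*} [Group G] (H : Subgroup G) : Subgroup G where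
  carrier := ⋂ N ∈ {N : Subgroup G | N.Normal ∧ N ≠ ⊥}, (H : Set G) * (N : Set G)
  one_mem' := by
    simp only [Set.mem_iInter]
    rintro N ⟨hN, -⟩
    exact ⟨1, H.one_mem, 1, N.one_mem, mul_one 1⟩
  mul_mem' := by
    intro a b ha hb
    simp only [Set.mem_iInter] at ha hb ⊢
    rintro N hN
    obtain ⟨h₁, hh₁, n₁, hn₁, rfl⟩ := ha N hN
    obtain ⟨h₂, hh₂, n₂, hn₂, rfl⟩ := hb N hN
    refine ⟨h₁ * h₂, H.mul_mem hh₁ hh₂, (h₂⁻¹ * n₁ * h₂) * n₂, ?_, by group⟩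
    refine N.mul_mem ?_ hn₂
    have := hN.1.conj_mem n₁ hn₁ h₂⁻¹
    simpa using this
  inv_mem' := by
    intro a ha
    simp only [Set.mem_iInter] at ha ⊢
    rintro N hN
    obtain ⟨h, hh, n, hn, rfl⟩ := ha N hN
    refine ⟨h⁻¹, H.inv_mem hh, h * n⁻¹ * h⁻¹, hN.1.conj_mem n⁻¹ (N.inv_mem hn) h, by group⟩

/-- A subgroup `H ≤ G` is quasi-prodense if its pro-normal closure has finite index. -/
def QuasiProdense {G : Type*} [Group G] (H : Subgroup G) : Prop :=
  (pronormalClosure H).index ≠ 0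

/-- `K` is a normal subgroup of the subgroup `H` (both subgroups of an ambient group). -/
def NormalIn {M : Type*} [Group M] (H K : Subgroup M) : Prop :=
  K ≤ H ∧ ∀ h ∈ H, ∀ k ∈ K, h * k * h⁻¹ ∈ K

/-- `K` is a subnormal subgroup of the subgroup `H`. -/
def SubnormalIn {M : Type*} [Group M] (H K : Subgroup M) : Prop :=
  ∃ (m : ℕ) (c : ℕ → Subgroup M), c 0 = K ∧ c m = H ∧ ∀ i < m, NormalIn (c (i + 1)) (c i)

/-- The iterated derived subgroups of a subgroup. -/
def iterDerived {M : Type*} [Group M] (H : Subgroup M) : ℕ → Subgroup M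
  | 0 => H
  | (k + 1) => ⁅iterDerived H k, iterDerived H k⁆
/-! If `g ∈ K` moves `v`, then `v` and `g v` are incomparable, so the conjugate of `rist_H(v)`
by `g` commutes with `rist_H(v)`. Going down a subnormal series from `H` to `K` then costs one
commutator per step, so some derived subgroup of `rist_H(v)` lies in `K`. For `K₁` and `K₂`
this puts a derived subgroup of `rist_H(v)` inside `⁅K₁, K₂⁆ = 1`, i.e. `rist_H(v)` would be
solvable. It is not: `rist_G(v)` is infinite, so it meets the finite index subgroup `H`
nontrivially, and a nontrivial element of the `d`-th derived subgroup of `rist_H(v)` moving `p`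
does not commute with a nontrivial element of the `d`-th derived subgroup of `rist_H(p)`. -/

open scoped commutatorElement

section GroupTheory

variable {M : Type*} [Group M]

theorem Subgroup.inf_ne_bot_of_infinite_of_relIndex_ne_zero {G H K : Subgroup M}
    (hfi : H.relIndex G ≠ 0) (hKG : K ≤ G) [Infinite K] : H ⊓ K ≠ ⊥ := by
  intro h
  have hK : H.relIndex K ≠ 0 := mt (Subgroup.relIndex_eq_zero_of_le_right hKG) hfi
  rw [← Subgroup.inf_relIndex_right, h, Subgroup.relIndex_bot_left,
    Nat.card_eq_zero_of_infinite] at hK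
  exact hK rfl

theorem iterDerived_antitone (H : Subgroup M) : Antitone (iterDerived H) :=
  antitone_nat_of_succ_le fun d => Subgroup.commutator_le_self (iterDerived H d)

theorem iterDerived_le_self (H : Subgroup M) (d : ℕ) : iterDerived H d ≤ H :=
  iterDerived_antitone H (Nat.zero_le d)

theorem iterDerived_mono {H K : Subgroup M} (h : H ≤ K) (d : ℕ) :
    iterDerived H d ≤ iterDerived K d := by
  induction d with
  | zero => exact h
  | succ d ih => exact Subgroup.commutator_mono ih ih

theorem commutatorElement_mul_left_of_commute {a x y : M} (hx : Commute a x)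
    (hy : Commute a y) : ⁅a * x, y⁆ = ⁅x, y⁆ := by
  have hxy : Commute a ⁅x, y⁆ :=
    ((hx.mul_right hy).mul_right hx.inv_right).mul_right hy.inv_right
  rw [commutatorElement_mul_left_eq_conj_mul, hy.commutator_eq, mul_one, hxy.eq,
    mul_inv_cancel_right]

theorem NormalIn.commutator_le {L K X : Subgroup M} {g : M} (hK : NormalIn L K) (hg : g ∈ K)
    (hX : X ≤ L) (hcomm : ∀ x ∈ X, ∀ y ∈ X, Commute (g * x * g⁻¹) y) : ⁅X, X⁆ ≤ K := by
  rw [Subgroup.commutator_le]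
  intro x hx y hy
  -- `a = g x⁻¹ g⁻¹` commutes with `X`, so `⁅x, y⁆ = ⁅a x, y⁆`, while `a x = g (x⁻¹ g⁻¹ x) ∈ K`.
  have hax : g * x⁻¹ * g⁻¹ * x ∈ K := by
    have e : g * x⁻¹ * g⁻¹ * x = g * (x⁻¹ * g⁻¹ * x⁻¹⁻¹) := by group
    rw [e]
    exact K.mul_mem hg (hK.2 x⁻¹ (hX (X.inv_mem hx)) g⁻¹ (K.inv_mem hg))
  have hcomm_mem : ⁅g * x⁻¹ * g⁻¹ * x, y⁆ ∈ K := by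
    rw [commutatorElement_def, mul_assoc, mul_assoc]
    exact K.mul_mem hax (by simpa [mul_assoc] using hK.2 y (hX hy) _ (K.inv_mem hax))
  rwa [commutatorElement_mul_left_of_commute (hcomm _ (X.inv_mem hx) _ hx)
    (hcomm _ (X.inv_mem hx) _ hy)] at hcomm_mem

theorem SubnormalIn.le {H K : Subgroup M} (hs : SubnormalIn H K) : K ≤ H := by
  obtain ⟨m, c, rfl, rfl, hc⟩ := hs
  induction m with
  | zero => exact le_rfl
  | succ m ih => exact (ih fun i hi => hc i (by omega)).trans (hc m (by omega)).1

theorem SubnormalIn.exists_iterDerived_le {H K X : Subgroup M} {g : M} (hs : SubnormalIn H K)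
    (hX : X ≤ H) (hg : g ∈ K) (hcomm : ∀ x ∈ X, ∀ y ∈ X, Commute (g * x * g⁻¹) y) :
    ∃ m, iterDerived X m ≤ K := by
  obtain ⟨m, c, rfl, rfl, hc⟩ := hs
  refine ⟨m, ?_⟩
  induction m generalizing c with
  | zero => exact hX
  | succ m ih =>
    have hD : iterDerived X m ≤ c 1 :=
      ih (fun i => c (i + 1)) ((hc 0 (by omega)).1 hg) (fun i hi => hc (i + 1) (by omega)) hX
    exact (hc 0 (by omega)).commutator_le hg hD fun x hx y hy =>
      hcomm x (iterDerived_le_self X m hx) y (iterDerived_le_self X m hy)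

end GroupTheory

namespace Vtx

variable {k : ℕ}

theorem Pre.trans {u v w : Vtx A k} (h₁ : Pre u v) (h₂ : Pre v w) : Pre u w :=
  List.IsPrefix.trans h₁ h₂

theorem Pre.len_le {v w : Vtx A k} (h : Pre v w) : v.len ≤ w.len :=
  List.IsPrefix.length_le h

theorem Pre.eq_of_len_eq {v w : Vtx A k} (h : Pre v w) (hl : v.len = w.len) : v = w :=
  Subtype.ext (List.IsPrefix.eq_of_length h hl)

theorem pre_or_pre_of_pre {u v w : Vtx A k} (hu : Pre u w) (hv : Pre v w) :
    Pre u v ∨ Pre v u :=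
  List.prefix_or_prefix_of_prefix hu hv

def Incomparable (v w : Vtx A k) : Prop := ¬ Pre v w ∧ ¬ Pre w v

theorem Incomparable.symm {v w : Vtx A k} (h : Incomparable v w) : Incomparable w v :=
  ⟨h.2, h.1⟩

theorem incomparable_of_len_eq {v w : Vtx A k} (hl : v.len = w.len) (hne : v ≠ w) :
    Incomparable v w :=
  ⟨fun h => hne (h.eq_of_len_eq hl), fun h => hne (h.eq_of_len_eq hl.symm).symm⟩

theorem Incomparable.not_pre_of_pre {u v w : Vtx A k} (h : Incomparable v w) (hv : Pre v u) :
    ¬ Pre w u :=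
  fun hw => (pre_or_pre_of_pre hv hw).elim h.1 h.2

end Vtx

theorem incomparable_apply_of_apply_ne {k : ℕ} {g : Equiv.Perm (Vtx A k)} {v : Vtx A k}
    (hg : g ∈ treeAut A k) (hgv : g v ≠ v) : Vtx.Incomparable (g v) v :=
  Vtx.incomparable_of_len_eq (hg.1 v) hgv

section RigidStabiliser

variable {k : ℕ} {H H' : Subgroup (Equiv.Perm (Vtx A k))}

theorem rist_le (H : Subgroup (Equiv.Perm (Vtx A k))) (v : Vtx A k) : rist H v ≤ H :=
  fun _ hz => hz.1

theorem rist_anti {v w : Vtx A k} (h : Vtx.Pre v w) : rist H w ≤ rist H v :=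
  fun _ hz => ⟨hz.1, fun u hu => hz.2 u fun hwu => hu (h.trans hwu)⟩

theorem inf_rist_le_rist (G : Subgroup (Equiv.Perm (Vtx A k))) (v : Vtx A k) :
    H ⊓ rist G v ≤ rist H v :=
  fun _ hz => ⟨hz.1, hz.2.2⟩

theorem pre_of_mem_rist {z : Equiv.Perm (Vtx A k)} {v u : Vtx A k} (hz : z ∈ rist H v)
    (hu : z u ≠ u) : Vtx.Pre v u :=
  not_not.mp fun h => hu (hz.2 u h)

theorem apply_self_of_mem_rist {z : Equiv.Perm (Vtx A k)} {v : Vtx A k}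
    (hz : z ∈ treeAut A k) (hzv : z ∈ rist H v) : z v = v := by
  by_contra h
  exact h (z.injective (hzv.2 _ (incomparable_apply_of_apply_ne hz h).symm.1))

theorem conj_mem_rist {g b : Equiv.Perm (Vtx A k)} {v : Vtx A k} (hgH : g ∈ H)
    (hg : g ∈ treeAut A k) (hb : b ∈ rist H v) : g * b * g⁻¹ ∈ rist H (g v) := by
  refine ⟨H.mul_mem (H.mul_mem hgH hb.1) (H.inv_mem hgH), fun w hw => ?_⟩
  have hv : ¬ Vtx.Pre v (g⁻¹ w) := fun h => hw (by simpa using (hg.2 v (g⁻¹ w)).mpr h)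
  rw [Equiv.Perm.mul_apply, Equiv.Perm.mul_apply, hb.2 _ hv]
  exact g.apply_symm_apply w

theorem eq_one_of_mem_rist_of_incomparable {v w : Vtx A k} (h : Vtx.Incomparable v w)
    {z : Equiv.Perm (Vtx A k)} (hv : z ∈ rist H v) (hw : z ∈ rist H' w) : z = 1 :=
  Equiv.ext fun _ => by_contra fun hu =>
    h.not_pre_of_pre (pre_of_mem_rist hv hu) (pre_of_mem_rist hw hu)

theorem commute_of_mem_rist_of_incomparable {v w : Vtx A k} (h : Vtx.Incomparable v w)
    {a b : Equiv.Perm (Vtx A k)} (ha : a ∈ rist H v) (hb : b ∈ rist H' w) : Commute a b :=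
  Equiv.Perm.Disjoint.commute fun _ => by
    by_contra! hu
    exact h.not_pre_of_pre (pre_of_mem_rist ha hu.1) (pre_of_mem_rist hb hu.2)

theorem commute_conj_of_mem_rist {g x y : Equiv.Perm (Vtx A k)} {v : Vtx A k} (hgH : g ∈ H)
    (hg : g ∈ treeAut A k) (hgv : g v ≠ v) (hx : x ∈ rist H v) (hy : y ∈ rist H v) :
    Commute (g * x * g⁻¹) y :=
  commute_of_mem_rist_of_incomparable (incomparable_apply_of_apply_ne hg hgv)
    (conj_mem_rist hgH hg hx) hy

theorem not_commute_of_apply_ne {x z : Equiv.Perm (Vtx A k)} {p : Vtx A k} (hxH : x ∈ H)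
    (hx : x ∈ treeAut A k) (hxp : x p ≠ p) (hz : z ∈ rist H p) (hz1 : z ≠ 1) :
    ¬ Commute x z := by
  intro hc
  have hconj : x * z * x⁻¹ = z := by rw [hc.eq, mul_inv_cancel_right]
  exact hz1 (eq_one_of_mem_rist_of_incomparable (incomparable_apply_of_apply_ne hx hxp)
    (hconj ▸ conj_mem_rist hxH hx hz) hz)

end RigidStabiliser

namespace IsWeaklyBranch

variable {k : ℕ} {G : Subgroup (Equiv.Perm (Vtx A k))}

theorem rist_ne_bot (hG : IsWeaklyBranch G) (q : Vtx A k) : rist G q ≠ ⊥ := by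
  obtain ⟨v, hv, hvne⟩ : ∃ v : Vtx A k, v.len = q.len ∧ rist G v ≠ ⊥ := by
    by_contra! h
    exact hG.rist_nt q.len (iSup₂_eq_bot.mpr h)
  obtain ⟨g, hgG, rfl⟩ := hG.trans v q hv
  obtain ⟨z, hz, hz1⟩ := (rist G v).bot_or_exists_ne_one.resolve_left hvne
  intro hbot
  have hconj := (Subgroup.eq_bot_iff_forall _).mp hbot _ (conj_mem_rist hgG (hG.le_aut hgG) hz)
  exact hz1 (by simpa using hconj)

theorem exists_pre_len_lt (hG : IsWeaklyBranch G) (q : Vtx A k) :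
    ∃ p, Vtx.Pre q p ∧ q.len < p.len := by
  obtain ⟨z, hz, hz1⟩ := (rist G q).bot_or_exists_ne_one.resolve_left (hG.rist_ne_bot q)
  obtain ⟨p, hp⟩ : ∃ p, z p ≠ p := DFunLike.ne_iff.mp hz1
  have hqp := pre_of_mem_rist hz hp
  refine ⟨p, hqp, hqp.len_le.lt_of_ne fun hl => hp ?_⟩
  rw [← hqp.eq_of_len_eq hl]
  exact apply_self_of_mem_rist (hG.le_aut hz.1) hz

theorem exists_pre_le_len (hG : IsWeaklyBranch G) (q : Vtx A k) (n : ℕ) :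
    ∃ p, Vtx.Pre q p ∧ n ≤ p.len := by
  induction n with
  | zero => exact ⟨q, List.prefix_refl _, Nat.zero_le _⟩
  | succ n ih =>
    obtain ⟨p, hqp, hp⟩ := ih
    obtain ⟨p', hpp', hp'⟩ := hG.exists_pre_len_lt p
    exact ⟨p', hqp.trans hpp', by omega⟩

theorem exists_mem_rist_ne_one_fixing (hG : IsWeaklyBranch G) (q : Vtx A k) (n : ℕ) :
    ∃ z ∈ rist G q, z ≠ 1 ∧ ∀ u : Vtx A k, u.len < n → z u = u := by
  obtain ⟨p, hqp, hp⟩ := hG.exists_pre_le_len q n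
  obtain ⟨z, hz, hz1⟩ := (rist G p).bot_or_exists_ne_one.resolve_left (hG.rist_ne_bot p)
  refine ⟨z, rist_anti hqp hz, hz1, fun u hu => hz.2 u fun hpu => ?_⟩
  have := hpu.len_le
  omega

theorem infinite_rist (hG : IsWeaklyBranch G) (q : Vtx A k) : Infinite (rist G q) := by
  choose z hz hz1 hfix using hG.exists_mem_rist_ne_one_fixing q
  by_contra hfin
  rw [not_infinite_iff_finite] at hfin
  obtain ⟨y, hy⟩ := Finite.exists_infinite_fiber fun n => (⟨z n, hz n⟩ : rist G q)
  have hfiber := Set.infinite_coe_iff.mp hy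
  obtain ⟨n, hn⟩ := hfiber.nonempty
  obtain ⟨u, hu⟩ : ∃ u, z n u ≠ u := DFunLike.ne_iff.mp (hz1 n)
  obtain ⟨m, hm, hum⟩ := hfiber.exists_gt u.len
  have hmn : z m = z n := congrArg Subtype.val (hm.trans hn.symm)
  exact hu (hmn ▸ hfix m u hum)

theorem rist_ne_bot_of_relIndex_ne_zero (hG : IsWeaklyBranch G)
    {H : Subgroup (Equiv.Perm (Vtx A k))} (hfi : H.relIndex G ≠ 0) (q : Vtx A k) :
    rist H q ≠ ⊥ :=
  have := hG.infinite_rist q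
  ne_bot_of_le_ne_bot (Subgroup.inf_ne_bot_of_infinite_of_relIndex_ne_zero hfi (rist_le G q))
    (inf_rist_le_rist G q)

end IsWeaklyBranch

theorem iterDerived_rist_ne_bot {k : ℕ} {H : Subgroup (Equiv.Perm (Vtx A k))}
    (hH : H ≤ treeAut A k) (hne : ∀ q, rist H q ≠ ⊥) (d : ℕ) (q : Vtx A k) :
    iterDerived (rist H q) d ≠ ⊥ := by
  induction d generalizing q with
  | zero => exact hne q
  | succ d ih =>
    obtain ⟨x, hx, hx1⟩ := (iterDerived (rist H q) d).bot_or_exists_ne_one.resolve_left (ih q)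
    have hxR : x ∈ rist H q := iterDerived_le_self _ d hx
    obtain ⟨p, hp⟩ : ∃ p, x p ≠ p := DFunLike.ne_iff.mp hx1
    obtain ⟨z, hz, hz1⟩ := (iterDerived (rist H p) d).bot_or_exists_ne_one.resolve_left (ih p)
    have hzq : z ∈ iterDerived (rist H q) d :=
      iterDerived_mono (rist_anti (pre_of_mem_rist hxR hp)) d hz
    intro hbot
    have hxz :=
      (Subgroup.eq_bot_iff_forall _).mp hbot _ (Subgroup.commutator_mem_commutator hx hzq)
    exact not_commute_of_apply_ne hxR.1 (hH hxR.1) hp (iterDerived_le_self _ d hz) hz1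
      (commutatorElement_eq_one_iff_commute.mp hxz)

theorem SubnormalIn.exists_iterDerived_rist_le {k : ℕ} {H K : Subgroup (Equiv.Perm (Vtx A k))}
    (hH : H ≤ treeAut A k) (hs : SubnormalIn H K) {g : Equiv.Perm (Vtx A k)} (hg : g ∈ K)
    {v : Vtx A k} (hgv : g v ≠ v) : ∃ m, iterDerived (rist H v) m ≤ K :=
  hs.exists_iterDerived_le (rist_le H v) hg fun _ hx _ hy =>
    commute_conj_of_mem_rist (hs.le hg) (hH (hs.le hg)) hgv hx hy

theorem commuting_subnormal_disjoint_support_general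
    (A : ℕ → Type*)
    (G H K₁ K₂ : Subgroup (Equiv.Perm (Vtx A 0))) (hG : IsWeaklyBranch G)
    (hHG : H ≤ G) (hfi : H.relIndex G ≠ 0)
    (h₁ : SubnormalIn H K₁) (h₂ : SubnormalIn H K₂)
    (hcomm : ⁅K₁, K₂⁆ = ⊥) :
    ¬ ∃ v : Vtx A 0, (∃ g ∈ K₁, g v ≠ v) ∧ (∃ g ∈ K₂, g v ≠ v) := by
  rintro ⟨v, ⟨g₁, hg₁, hg₁v⟩, ⟨g₂, hg₂, hg₂v⟩⟩
  have hHAut : H ≤ treeAut A 0 := hHG.trans hG.le_aut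
  obtain ⟨m₁, hm₁⟩ := h₁.exists_iterDerived_rist_le hHAut hg₁ hg₁v
  obtain ⟨m₂, hm₂⟩ := h₂.exists_iterDerived_rist_le hHAut hg₂ hg₂v
  apply iterDerived_rist_ne_bot hHAut (hG.rist_ne_bot_of_relIndex_ne_zero hfi) (max m₁ m₂ + 1) v
  rw [eq_bot_iff, ← hcomm]
  exact Subgroup.commutator_mono ((iterDerived_antitone _ (le_max_left _ _)).trans hm₁)
    ((iterDerived_antitone _ (le_max_right _ _)).trans hm₂)

/-- In a weakly branch group `G`, two commuting subnormal subgroups of a finite index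
subgroup `H ≤ G` have disjoint support. -/
theorem commuting_subnormal_disjoint_support
    (A : ℕ → Type*) [∀ i, Fintype (A i)] (hA : ∀ i, 2 ≤ Fintype.card (A i))
    (G H K₁ K₂ : Subgroup (Equiv.Perm (Vtx A 0))) (hG : IsWeaklyBranch G)
    (hHG : H ≤ G) (hfi : H.relIndex G ≠ 0)
    (h₁ : SubnormalIn H K₁) (h₂ : SubnormalIn H K₂)
    (hcomm : ⁅K₁, K₂⁆ = ⊥) :
    ¬ ∃ v : Vtx A 0, (∃ g ∈ K₁, g v ≠ v) ∧ (∃ g ∈ K₂, g v ≠ v) :=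
  commuting_subnormal_disjoint_support_general A G H K₁ K₂ hG hHG hfi h₁ h₂ hcomm
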